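/- arXiv:2407.06911 — 2 statements merged into one kernel-verified Lean document; each statement's English description precedes it below -/
import Mathlib

section
/- Fix an integer k ≥ 2. Let d_{u,1},…,d_{u,k} and d_{v,1},…,d_{v,k} range over reals satisfying 0 ≤ d_{w,i} ≤ 1 for all i and ∑_{i=1}^k d_{w,i} = k−1 for each w ∈ {u,v}. Then for any fixed feasible values (d*_{u,i}) and (d*_{v,i}), there exist vectors a_u, a_v ∈ ℝ^k with ‖a_u‖₂ ≤ √(k/2) and ‖a_v‖₂ ≤ √(k/2) such that the function ∑_i a_{u,i} d_{u,i} + ∑_i a_{v,i} d_{v,i} + (1/2)∑_i |d_{u,i} − d_{v,i}| attains its minimum over all feasible (d_{u,i}),(d_{v,i}) at the fixed values (d*_{u,i}),(d*_{v,i}). -/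
open Finset

theorem exists_correction_vectors (k : ℕ) (hk : 2 ≤ k)
    (dustar dvstar : Fin k → ℝ)
    (hu0 : ∀ i, 0 ≤ dustar i) (hu1 : ∀ i, dustar i ≤ 1) (husum : ∑ i, dustar i = (k : ℝ) - 1)
    (hv0 : ∀ i, 0 ≤ dvstar i) (hv1 : ∀ i, dvstar i ≤ 1) (hvsum : ∑ i, dvstar i = (k : ℝ) - 1) :
    ∃ au av : Fin k → ℝ,
      Real.sqrt (∑ i, (au i) ^ 2) ≤ Real.sqrt ((k : ℝ) / 2) ∧
      Real.sqrt (∑ i, (av i) ^ 2) ≤ Real.sqrt ((k : ℝ) / 2) ∧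
      ∀ du dv : Fin k → ℝ,
        (∀ i, 0 ≤ du i) → (∀ i, du i ≤ 1) → (∑ i, du i = (k : ℝ) - 1) →
        (∀ i, 0 ≤ dv i) → (∀ i, dv i ≤ 1) → (∑ i, dv i = (k : ℝ) - 1) →
        (∑ i, au i * dustar i) + (∑ i, av i * dvstar i)
            + (1 / 2) * ∑ i, |dustar i - dvstar i|
          ≤ (∑ i, au i * du i) + (∑ i, av i * dv i) + (1 / 2) * ∑ i, |du i - dv i| := by
  set s : Fin k → ℝ := fun i => if dvstar i ≤ dustar i then 1 else -1 with hs
  have hsq : ∀ i, (s i) ^ 2 = 1 := by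
    intro i; simp only [hs]; split <;> norm_num
  have hnorm : Real.sqrt (∑ i : Fin k, (s i / 2) ^ 2) ≤ Real.sqrt ((k : ℝ) / 2) := by
    apply Real.sqrt_le_sqrt
    have : ∑ i : Fin k, (s i / 2) ^ 2 = (k : ℝ) / 4 := by
      simp [div_pow, hsq, Finset.sum_div]
      ring
    rw [this]
    have : (0:ℝ) ≤ k := Nat.cast_nonneg k
    linarith
  have hnorm' : Real.sqrt (∑ i : Fin k, (-(s i) / 2) ^ 2) ≤ Real.sqrt ((k : ℝ) / 2) := by
    simpa [neg_div, neg_pow] using hnorm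
  refine ⟨fun i => -(s i) / 2, fun i => s i / 2, hnorm', hnorm, ?_⟩
  intro du dv _ _ _ _ _ _
  have key : ∀ (a b : Fin k → ℝ),
      (∑ i, -(s i) / 2 * a i) + (∑ i, s i / 2 * b i) + (1 / 2) * ∑ i, |a i - b i|
        = (1 / 2) * ∑ i, (|a i - b i| - s i * (a i - b i)) := by
    intro a b
    rw [Finset.mul_sum, Finset.mul_sum, ← Finset.sum_add_distrib, ← Finset.sum_add_distrib]
    exact Finset.sum_congr rfl (fun i _ => by ring)
  rw [key, key]
  have hL : ∑ i, (|dustar i - dvstar i| - s i * (dustar i - dvstar i)) = 0 := by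
    apply Finset.sum_eq_zero
    intro i _
    simp only [hs]
    rcases le_or_gt (dvstar i) (dustar i) with h | h
    · rw [if_pos h, abs_of_nonneg (by linarith)]; ring
    · rw [if_neg (not_le.mpr h), abs_of_neg (by linarith)]; ring
  have hR : 0 ≤ ∑ i, (|du i - dv i| - s i * (du i - dv i)) := by
    apply Finset.sum_nonneg
    intro i _
    have : s i * (du i - dv i) ≤ |du i - dv i| := by
      calc s i * (du i - dv i) ≤ |s i * (du i - dv i)| := le_abs_self _
        _ = |du i - dv i| := by
          rw [abs_mul]
          have : |s i| = 1 := by simp only [hs]; split <;> norm_num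
          rw [this, one_mul]
    linarith
  rw [hL]
  nlinarith
end

section
/- Let G be a weighted undirected graph with nonnegative edge weights on vertex set V, and let Ĝ be G with two additional vertices s, t (with nonnegative weighted edges from s, t to V). Let C be a maximum cut of G, let Ĉ be a global maximum cut of Ĝ, let Ĉ_st be a maximum cut of Ĝ subject to separating s and t, and let Ĉ_st^G be the restriction of Ĉ_st to V. Then the cut value of C in G is at most the cut value of Ĉ_st^G in G plus d_s + d_t + min{d_s, d_t}, where d_s and d_t are the weighted degrees of s and t in Ĝ. -/
/-
Extending the maximum cut `C` of `G` by putting `s` and `t` on opposite sides gives an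
`s`-`t` cut of `Ĝ` at least as heavy, hence at most as heavy as `Ĉ_st`; and deleting `s`, `t`
loses at most `d_s + d_t` from the value of `Ĉ_st`.
-/

open Finset

/-- Cut value of a vertex bipartition `σ` with respect to symmetric weights `w`. -/
noncomputable def cutVal {V : Type*} [Fintype V] (w : V → V → ℝ) (σ : V → Bool) : ℝ :=
  (1 / 2) * ∑ a, ∑ b, if σ a ≠ σ b then w a b else 0

section CutOfSum

variable {α β : Type*} [Fintype α] [Fintype β]

theorem Fintype.sum_sum_sum_type_split {M : Type*} [AddCommMonoid M]
    (f : α ⊕ β → α ⊕ β → M) :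
    ∑ a, ∑ b, f a b
      = ∑ u, ∑ v, f (.inl u) (.inl v) + ∑ u, ∑ c, f (.inl u) (.inr c)
        + ∑ c, ∑ x, f (.inr c) x := by
  simp only [Fintype.sum_sum_type (fun a => ∑ b, f a b), Fintype.sum_sum_type (f (.inl _)),
    Finset.sum_add_distrib]

variable {w : α ⊕ β → α ⊕ β → ℝ} (σ : α ⊕ β → Bool)

theorem cutVal_sum_eq :
    cutVal w σ = cutVal (fun u v => w (.inl u) (.inl v)) (fun u => σ (.inl u))
      + (1 / 2) * (∑ u, ∑ c, if σ (.inl u) ≠ σ (.inr c) then w (.inl u) (.inr c) else 0)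
      + (1 / 2) * ∑ c, ∑ x, if σ (.inr c) ≠ σ x then w (.inr c) x else 0 := by
  rw [cutVal, cutVal, Fintype.sum_sum_sum_type_split]
  ring

theorem cutVal_inl_le_cutVal (hnn : ∀ a b, 0 ≤ w a b) :
    cutVal (fun u v => w (.inl u) (.inl v)) (fun u => σ (.inl u)) ≤ cutVal w σ := by
  have hcut_nn : ∀ a b, 0 ≤ if σ a ≠ σ b then w a b else 0 := fun a b => by
    split_ifs
    exacts [hnn a b, le_rfl]
  rw [cutVal_sum_eq]
  have h₁ := Finset.sum_nonneg fun u (_ : u ∈ univ) =>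
    Finset.sum_nonneg fun c (_ : c ∈ univ) => hcut_nn (.inl u) (.inr c)
  have h₂ := Finset.sum_nonneg fun c (_ : c ∈ univ) =>
    Finset.sum_nonneg fun x (_ : x ∈ univ) => hcut_nn (.inr c) x
  linarith

theorem cutVal_le_cutVal_inl_add (hsym : ∀ a b, w a b = w b a) (hnn : ∀ a b, 0 ≤ w a b) :
    cutVal w σ ≤ cutVal (fun u v => w (.inl u) (.inl v)) (fun u => σ (.inl u))
      + ∑ c, ∑ x, w (.inr c) x := by
  have hcut_le : ∀ a b, (if σ a ≠ σ b then w a b else 0) ≤ w a b := fun a b => by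
    split_ifs
    exacts [le_rfl, hnn a b]
  have hcross : (∑ u, ∑ c, if σ (.inl u) ≠ σ (.inr c) then w (.inl u) (.inr c) else 0)
      ≤ ∑ c, ∑ x, w (.inr c) x :=
    calc _ ≤ ∑ u, ∑ c, w (.inl u) (.inr c) := by gcongr with u _ c _; exact hcut_le _ _
      _ = ∑ c, ∑ u, w (.inr c) (.inl u) := by rw [Finset.sum_comm]; simp only [hsym (.inl _)]
      _ ≤ ∑ c, ∑ x, w (.inr c) x := by
        gcongr with c _
        rw [Fintype.sum_sum_type]
        exact le_add_of_nonneg_right (Finset.sum_nonneg fun _ _ => hnn _ _)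
  have hfrom : (∑ c, ∑ x, if σ (.inr c) ≠ σ x then w (.inr c) x else 0)
      ≤ ∑ c, ∑ x, w (.inr c) x := by
    gcongr with c _ x _
    exact hcut_le _ _
  rw [cutVal_sum_eq]
  linarith

end CutOfSum

theorem maxcut_via_st_general (n : ℕ)
    (w : (Fin n ⊕ Bool) → (Fin n ⊕ Bool) → ℝ)
    (hsym : ∀ a b, w a b = w b a) (hnn : ∀ a b, 0 ≤ w a b)
    (C : Fin n → Bool)
    (Cst : (Fin n ⊕ Bool) → Bool)
    (hCst : ∀ σ : (Fin n ⊕ Bool) → Bool,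
      σ (Sum.inr false) ≠ σ (Sum.inr true) → cutVal w σ ≤ cutVal w Cst)
    (ds dt : ℝ)
    (hds : ds = ∑ x, w (Sum.inr false) x)
    (hdt : dt = ∑ x, w (Sum.inr true) x) :
    cutVal (fun u v => w (Sum.inl u) (Sum.inl v)) C
      ≤ cutVal (fun u v => w (Sum.inl u) (Sum.inl v)) (fun u => Cst (Sum.inl u))
        + ds + dt + min ds dt := by
  have hC_le : cutVal (fun u v => w (.inl u) (.inl v)) C ≤ cutVal w (Sum.elim C id) :=
    cutVal_inl_le_cutVal (Sum.elim C id) hnn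
  have hext_le : cutVal w (Sum.elim C id) ≤ cutVal w Cst := hCst _ (by simp)
  have hCst_le := cutVal_le_cutVal_inl_add Cst hsym hnn
  rw [Fintype.sum_bool, ← hds, ← hdt] at hCst_le
  have hmin_nn : 0 ≤ min ds dt :=
    le_min (hds ▸ Finset.sum_nonneg fun _ _ => hnn _ _)
      (hdt ▸ Finset.sum_nonneg fun _ _ => hnn _ _)
  linarith

theorem maxcut_via_st (n : ℕ)
    (w : (Fin n ⊕ Bool) → (Fin n ⊕ Bool) → ℝ)
    (hsym : ∀ a b, w a b = w b a) (hnn : ∀ a b, 0 ≤ w a b)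
    (hloop : ∀ a, w a a = 0)
    -- `Sum.inr false` plays the role of `s`, `Sum.inr true` plays the role of `t`.
    (C : Fin n → Bool)
    (hC : ∀ τ : Fin n → Bool,
      cutVal (fun u v => w (Sum.inl u) (Sum.inl v)) τ
        ≤ cutVal (fun u v => w (Sum.inl u) (Sum.inl v)) C)
    (Chat : (Fin n ⊕ Bool) → Bool)
    (hChat : ∀ σ, cutVal w σ ≤ cutVal w Chat)
    (Cst : (Fin n ⊕ Bool) → Bool)
    (hCstSep : Cst (Sum.inr false) ≠ Cst (Sum.inr true))
    (hCst : ∀ σ : (Fin n ⊕ Bool) → Bool,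
      σ (Sum.inr false) ≠ σ (Sum.inr true) → cutVal w σ ≤ cutVal w Cst)
    (ds dt : ℝ)
    (hds : ds = ∑ x, w (Sum.inr false) x)
    (hdt : dt = ∑ x, w (Sum.inr true) x) :
    cutVal (fun u v => w (Sum.inl u) (Sum.inl v)) C
      ≤ cutVal (fun u v => w (Sum.inl u) (Sum.inl v)) (fun u => Cst (Sum.inl u))
        + ds + dt + min ds dt :=
  maxcut_via_st_general n w hsym hnn C Cst hCst ds dt hds hdt
end
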